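/- For all integers k₁, k₂ ≥ 1, ᾱ_{k₁} + ᾱ_{k₂} ≤ ᾱ_{k₁+k₂} ≤ ᾱ_{k₁} + ᾱ_{k₂} + 1. In particular the sequence (ᾱ_k) is non-decreasing, and for all positive integers q and k one has ᾱ_k ≥ ᾱ_q·⌊k/q⌋ ≥ (ᾱ_q/q)(k − q + 1). -/

import Mathlib

open Filter Finset

/-- A letter of the alphabet `{1,2,3}`. -/
abbrev Letter := Fin 3

/-- A word: a finite (possibly empty) sequence of letters. -/
abbrev Word := List Letter

/-- Adjacency of two words: `σ ≠ τ`, and writing `σ = β ++ σ'`, `τ = β ++ τ'` with `β`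
the longest common prefix, either one of `σ'`, `τ'` is empty and the other uses at most two
distinct letters, or `σ' = i j^k` and `τ' = j i^{k'}` for distinct letters `i ≠ j`. -/
def WordAdj (σ τ : Word) : Prop :=
  σ ≠ τ ∧ ∃ β σ' τ' : Word,
    σ = β ++ σ' ∧ τ = β ++ τ' ∧
    ((σ' = [] ∧ τ'.toFinset.card ≤ 2) ∨
     (τ' = [] ∧ σ'.toFinset.card ≤ 2) ∨
     (∃ (i j : Letter) (k k' : ℕ), i ≠ j ∧
        σ' = i :: List.replicate k j ∧ τ' = j :: List.replicate k' i))

/-- The graph `G_t`: vertices are the words of length at most `t` (all other words are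
isolated), with adjacency `WordAdj`. -/
def Gt (t : ℕ) : SimpleGraph Word where
  Adj σ τ := σ.length ≤ t ∧ τ.length ≤ t ∧ WordAdj σ τ
  symm := by
    constructor
    rintro σ τ ⟨h1, h2, hne, β, σ', τ', e1, e2, h3⟩
    refine ⟨h2, h1, hne.symm, β, τ', σ', e2, e1, ?_⟩
    rcases h3 with h | h | ⟨i, j, k, k', hij, hs, ht⟩
    · exact Or.inr (Or.inl h)
    · exact Or.inl h
    · exact Or.inr (Or.inr ⟨j, i, k', k, hij.symm, ht, hs⟩)
  loopless := ⟨fun σ h => h.2.2.1 rfl⟩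

/-- `dW t σ τ` is the geodesic distance `d_t(σ,τ)` in the graph `G_t`. -/
noncomputable def dW (t : ℕ) (σ τ : Word) : ℕ := (Gt t).dist σ τ

/-- Length of the longest suffix of `σ` using at most two distinct letters. -/
def suffLen (σ : Word) : ℕ :=
  Nat.findGreatest (fun m => (σ.drop (σ.length - m)).toFinset.card ≤ 2) σ.length

/-- `fW σ = τ₂` where `σ = τ₂τ₁` and `τ₁` is the longest suffix of `σ` using at most two
distinct letters; `fW [] = []`. -/
def fW (σ : Word) : Word := σ.take (σ.length - suffLen σ)

/-- `ω(σ)`: the least `n ≥ 0` with `f^[n] σ = ∅`. -/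
noncomputable def omegaW (σ : Word) : ℕ := sInf {n : ℕ | fW^[n] σ = []}

/-- `L(σ) = d_{|σ|}(σ, ∅) - 1` for nonempty `σ`, and `L(∅) = 0`. -/
noncomputable def Lw (σ : Word) : ℕ := if σ = [] then 0 else dW σ.length σ [] - 1

/-- `ᾱ_m`: the average of `L` over the `3^m` words of length `m`. -/
noncomputable def alphaBar (m : ℕ) : ℝ :=
  (∑ v : Fin m → Letter, (Lw (List.ofFn v) : ℝ)) / 3 ^ m

/-- `α* = sup_{m ≥ 1} ᾱ_m / m`. -/
noncomputable def alphaStar : ℝ :=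
  sSup {x : ℝ | ∃ m : ℕ, 1 ≤ m ∧ x = alphaBar m / m}

/-- `#V_t = (3^{t+1} - 1)/2`, the number of vertices of `G_t`, as a real number. -/
noncomputable def Nv (t : ℕ) : ℝ := ((3 : ℝ) ^ (t + 1) - 1) / 2

/-- The sum of `d_t(σ,τ)` over all ordered pairs of words `σ, τ ∈ V_t`
(twice the sum over unordered pairs of distinct words). -/
noncomputable def pairSum (t : ℕ) : ℝ :=
  ∑ k ∈ range (t + 1), ∑ l ∈ range (t + 1),
    ∑ v : Fin k → Letter, ∑ w : Fin l → Letter,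
      (dW t (List.ofFn v) (List.ofFn w) : ℝ)

/-- The average path length `D̄(t)` of `G_t`. -/
noncomputable def Dbar (t : ℕ) : ℝ := pairSum t / (Nv t * (Nv t - 1))

/-- `κ_t = (Σ_{σ ∈ V_t} L(σ)) / #V_t`. -/
noncomputable def kappa (t : ℕ) : ℝ :=
  (∑ k ∈ range (t + 1), ∑ v : Fin k → Letter, (Lw (List.ofFn v) : ℝ)) / Nv t

/-- `π_t`: the sum of `d_t(σ,τ)` over unordered pairs of distinct `σ, τ ∈ V_t`. -/
noncomputable def piT (t : ℕ) : ℝ := pairSum t / 2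

/-- `μ_t`: the sum of `d_t(σ,τ)` over unordered pairs of distinct `σ, τ ∈ V_t`
having the same first letter. -/
noncomputable def muT (t : ℕ) : ℝ :=
  (∑ i : Letter, ∑ k ∈ range t, ∑ l ∈ range t,
    ∑ v : Fin k → Letter, ∑ w : Fin l → Letter,
      (dW t (i :: List.ofFn v) (i :: List.ofFn w) : ℝ)) / 2

/-- `λ_t = Σ_{σ ∈ V_t, σ ≠ ∅} d_t(σ, ∅)`. -/
noncomputable def lambdaT (t : ℕ) : ℝ :=
  ∑ k ∈ Finset.Icc 1 t, ∑ v : Fin k → Letter, (dW t (List.ofFn v) [] : ℝ)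

/-- `ν_t = Σ_{i<j} Σ_{|σ'|,|τ'| ≤ t-1} d_t(iσ', jτ')`. -/
noncomputable def nuT (t : ℕ) : ℝ :=
  ∑ i : Letter, ∑ j : Letter,
    if i < j then
      ∑ k ∈ range t, ∑ l ∈ range t,
        ∑ v : Fin k → Letter, ∑ w : Fin l → Letter,
          (dW t (i :: List.ofFn v) (j :: List.ofFn w) : ℝ)
    else 0

/-- `IsNormalDecomp σ τs`: `τs = [τ₁, …, τ_l]` (with `l ≥ 1`) is a normal decomposition
of `σ`: `σ = τ₁⋯τ_l`; `#τ₁ ≤ 2`, `|τ₁| ≥ 1`; `#τ_i = 2`, `|τ_i| ≥ 2` for `i ≥ 2`; and for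
`i < l` the last letter of `τ_i` is the unique letter of the alphabet not appearing
in `τ_{i+1}`. -/
def IsNormalDecomp (σ : Word) (τs : List Word) : Prop :=
  σ = τs.flatten ∧ τs ≠ [] ∧
  (∀ i : Fin τs.length,
    (i.1 = 0 → 1 ≤ (τs.get i).length ∧ (τs.get i).toFinset.card ≤ 2) ∧
    (1 ≤ i.1 → 2 ≤ (τs.get i).length ∧ (τs.get i).toFinset.card = 2)) ∧
  (∀ i : ℕ, ∀ h : i + 1 < τs.length,
    ∃ c : Letter, (τs.get ⟨i, Nat.lt_of_succ_lt h⟩).getLast? = some c ∧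
      c ∉ (τs.get ⟨i + 1, h⟩).toFinset ∧
      ∀ c' : Letter, c' ∉ (τs.get ⟨i + 1, h⟩).toFinset → c' = c)

/-- `W_{k₁⋯k_l}`: the number of words of length `k₁ + ⋯ + k_l` admitting a normal
decomposition into blocks of lengths `k₁, …, k_l`. -/
noncomputable def Wcount (ks : List ℕ) : ℕ :=
  Nat.card {σ : Word // ∃ τs : List Word, IsNormalDecomp σ τs ∧ τs.map List.length = ks}

/-- `Ē(t) = 3^{-t} Σ_{q ≥ 1} Σ_{k₁ ≥ 1, k₂,…,k_q ≥ 2, k₁+⋯+k_q = t} (q-1)·W_{k₁⋯k_q}`. -/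
noncomputable def Ebar (t : ℕ) : ℝ :=
  ((∑ c : Composition t,
      if ∀ i ∈ c.blocks.tail, 2 ≤ i then
        (c.blocks.length - 1) * Wcount c.blocks
      else 0 : ℕ) : ℝ) / 3 ^ t

/-!
Stripping from a word its longest suffix on at most two letters (`fW`) is an edge of `G_t`, and
the number `ω(σ)` of strips needed to reach `∅` drops by at most one along any edge, so
`d_t(σ, ∅) = ω(σ)` and `L = ω - 1`. Stripping `στ` proceeds inside `τ` until what is left of `τ`
uses at most two letters, whence `ω(σ) + ω(τ) - 1 ≤ ω(στ) ≤ ω(σ) + ω(τ)`, i.e.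
`L(σ) + L(τ) ≤ L(στ) ≤ L(σ) + L(τ) + 1`. Averaging over `στ` with `|σ| = k₁`, `|τ| = k₂` gives the
bounds on `ᾱ_{k₁+k₂}`; the remaining claims follow from superadditivity and `ᾱ ≥ 0`.
-/

open scoped BigOperators

lemma List.card_toFinset_le_of_subset {α : Type*} [DecidableEq α] {l l' : List α} (h : l ⊆ l') :
    l.toFinset.card ≤ l'.toFinset.card :=
  Finset.card_le_card fun _ hx => List.mem_toFinset.2 (h (List.mem_toFinset.1 hx))

lemma fW_prefix (σ : Word) : fW σ <+: σ := List.take_prefix _ _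

lemma exists_eq_fW_append (σ : Word) : ∃ ρ : Word, σ = fW σ ++ ρ ∧ ρ.toFinset.card ≤ 2 :=
  ⟨_, (List.take_append_drop _ _).symm,
    Nat.findGreatest_spec (P := fun m => (σ.drop (σ.length - m)).toFinset.card ≤ 2) (m := 0)
      (Nat.zero_le _) (by simp)⟩

/-- `fW σ` is the shortest prefix of `σ` whose complement uses at most two letters. -/
lemma fW_append_prefix {α ρ : Word} (hρ : ρ.toFinset.card ≤ 2) : fW (α ++ ρ) <+: α := by
  have hlen : ρ.length ≤ suffLen (α ++ ρ) :=
    Nat.le_findGreatest (by simp) (by simpa using hρ)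
  refine List.prefix_of_prefix_length_le (fW_prefix _) (List.prefix_append _ _) ?_
  simp only [fW, List.length_take, List.length_append] at hlen ⊢
  omega

lemma fW_length_lt {σ : Word} (h : σ ≠ []) : (fW σ).length < σ.length := by
  have hpre : fW σ <+: σ.dropLast := by
    conv_lhs => rw [← List.dropLast_append_getLast h]
    exact fW_append_prefix (by simp)
  have := hpre.length_le
  simp only [List.length_dropLast] at this
  have := List.length_pos_iff.2 h
  omega

lemma fW_eq_nil_iff {σ : Word} : fW σ = [] ↔ σ.toFinset.card ≤ 2 := by
  constructor
  · intro h
    obtain ⟨ρ, hσ, hρ⟩ := exists_eq_fW_append σ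
    rw [h, List.nil_append] at hσ
    rwa [hσ]
  · intro h
    simpa using fW_append_prefix (α := []) h

lemma fW_prefix_fW {α σ : Word} (h : α <+: σ) : fW α <+: fW σ := by
  rcases le_total α.length (fW σ).length with hle | hlt
  · exact (fW_prefix α).trans (List.prefix_of_prefix_length_le h (fW_prefix σ) hle)
  obtain ⟨ρ, hσ, hρ⟩ := exists_eq_fW_append σ
  obtain ⟨ρ', rfl⟩ := List.prefix_of_prefix_length_le (fW_prefix σ) h hlt
  have hρ' : ρ' <+: ρ := by
    rw [← List.prefix_append_right_inj (fW σ), ← hσ]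
    exact h
  exact fW_append_prefix ((List.card_toFinset_le_of_subset hρ'.subset).trans hρ)

lemma fW_append_of_two_lt_card {σ τ : Word} (hτ : 2 < τ.toFinset.card) :
    fW (σ ++ τ) = σ ++ fW τ := by
  obtain ⟨ρ, hστ, hρ⟩ := exists_eq_fW_append (σ ++ τ)
  obtain ⟨ρ', hτ', hρ'⟩ := exists_eq_fW_append τ
  have hle : fW (σ ++ τ) <+: σ ++ fW τ := by
    have := fW_append_prefix (α := σ ++ fW τ) hρ'
    rwa [List.append_assoc, ← hτ'] at this
  -- the stripped suffix `ρ` of `στ` cannot contain all of `τ`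
  have hge : σ ++ fW τ <+: fW (σ ++ τ) := by
    rcases List.append_eq_append_iff.1 hστ with ⟨γ, hfw, hτγ⟩ | ⟨γ, hσγ, hργ⟩
    · rw [hfw, List.prefix_append_right_inj, hτγ]
      exact fW_append_prefix hρ
    · have : τ ⊆ ρ := hργ ▸ List.subset_append_right _ _
      exact absurd ((List.card_toFinset_le_of_subset this).trans hρ) (not_le.2 hτ)
  exact hle.eq_of_length (le_antisymm hle.length_le hge.length_le)

theorem fW_induction {motive : Word → Prop} (nil : motive [])
    (step : ∀ σ, σ ≠ [] → motive (fW σ) → motive σ) (σ : Word) : motive σ := by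
  by_cases h : σ = []
  · exact h ▸ nil
  · exact step σ h (fW_induction nil step (fW σ))
termination_by σ.length
decreasing_by exact fW_length_lt h

lemma omegaW_nil : omegaW [] = 0 :=
  Nat.sInf_eq_zero.2 (Or.inl rfl)

lemma exists_fW_iterate_eq_nil (σ : Word) : ∃ n, fW^[n] σ = [] := by
  induction σ using fW_induction with
  | nil => exact ⟨0, rfl⟩
  | step σ _ ih =>
    obtain ⟨n, hn⟩ := ih
    exact ⟨n + 1, hn⟩

lemma omegaW_of_ne_nil {σ : Word} (h : σ ≠ []) : omegaW σ = omegaW (fW σ) + 1 := by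
  have hpos : 1 ≤ omegaW σ := by
    by_contra! h0
    have : fW^[omegaW σ] σ = [] := Nat.sInf_mem (exists_fW_iterate_eq_nil σ)
    rw [Nat.lt_one_iff.1 h0] at this
    exact h this
  exact (Nat.sInf_add hpos).symm

lemma omegaW_pos {σ : Word} (h : σ ≠ []) : 0 < omegaW σ := by
  rw [omegaW_of_ne_nil h]
  exact Nat.succ_pos _

lemma omegaW_eq_one {σ : Word} (hne : σ ≠ []) (h : σ.toFinset.card ≤ 2) : omegaW σ = 1 := by
  rw [omegaW_of_ne_nil hne, fW_eq_nil_iff.2 h, omegaW_nil]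

lemma omegaW_mono_of_prefix {α σ : Word} (h : α <+: σ) : omegaW α ≤ omegaW σ := by
  induction σ using fW_induction generalizing α with
  | nil => rw [List.prefix_nil.1 h]
  | step σ hσ ih =>
    rcases eq_or_ne α [] with rfl | hα
    · simp [omegaW_nil]
    rw [omegaW_of_ne_nil hα, omegaW_of_ne_nil hσ]
    exact Nat.succ_le_succ (ih (fW_prefix_fW h))

lemma omegaW_append_le_succ {α ρ : Word} (hρ : ρ.toFinset.card ≤ 2) :
    omegaW (α ++ ρ) ≤ omegaW α + 1 := by
  rcases eq_or_ne (α ++ ρ) [] with h | h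
  · simp [h, omegaW_nil]
  rw [omegaW_of_ne_nil h]
  exact Nat.succ_le_succ (omegaW_mono_of_prefix (fW_append_prefix hρ))

lemma omegaW_le_succ_of_wordAdj {σ τ : Word} (h : WordAdj σ τ) : omegaW σ ≤ omegaW τ + 1 := by
  obtain ⟨-, β, σ', τ', rfl, rfl, ⟨rfl, -⟩ | ⟨rfl, hσ'⟩ | ⟨i, j, k, k', -, rfl, rfl⟩⟩ := h
  · rw [List.append_nil]
    exact (omegaW_mono_of_prefix (List.prefix_append _ _)).trans (Nat.le_succ _)
  · rw [List.append_nil]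
    exact omegaW_append_le_succ hσ'
  · have hij : (i :: List.replicate k j).toFinset.card ≤ 2 :=
      (List.card_toFinset_le_of_subset (l' := [i, j])
        (List.cons_subset_cons i (List.replicate_subset_singleton k j))).trans
        (List.toFinset_card_le _)
    exact (omegaW_append_le_succ hij).trans
      (Nat.succ_le_succ (omegaW_mono_of_prefix (List.prefix_append _ _)))

lemma omegaW_append_le (σ τ : Word) : omegaW (σ ++ τ) ≤ omegaW σ + omegaW τ := by
  induction τ using fW_induction with
  | nil => simp [omegaW_nil]
  | step τ hτ ih =>
    rcases le_or_gt τ.toFinset.card 2 with hc | hc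
    · rw [omegaW_eq_one hτ hc]
      exact omegaW_append_le_succ hc
    · rw [omegaW_of_ne_nil (σ := σ ++ τ) (by simp [hτ]), fW_append_of_two_lt_card hc,
        omegaW_of_ne_nil hτ]
      omega

lemma omegaW_add_le_omegaW_append (σ τ : Word) : omegaW σ + omegaW τ ≤ omegaW (σ ++ τ) + 1 := by
  induction τ using fW_induction with
  | nil => simp [omegaW_nil]
  | step τ hτ ih =>
    rcases le_or_gt τ.toFinset.card 2 with hc | hc
    · rw [omegaW_eq_one hτ hc]
      exact Nat.add_le_add_right (omegaW_mono_of_prefix (List.prefix_append _ _)) 1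
    · rw [omegaW_of_ne_nil (σ := σ ++ τ) (by simp [hτ]), fW_append_of_two_lt_card hc,
        omegaW_of_ne_nil hτ]
      omega

section Distance

variable {t : ℕ}

lemma Gt_adj_fW {σ : Word} (ht : σ.length ≤ t) (hσ : σ ≠ []) : (Gt t).Adj σ (fW σ) := by
  obtain ⟨ρ, hσρ, hρ⟩ := exists_eq_fW_append σ
  refine ⟨ht, (fW_prefix σ).length_le.trans ht, fun h => (fW_length_lt hσ).ne (h ▸ rfl),
    fW σ, ρ, [], hσρ, (List.append_nil _).symm, Or.inr (Or.inl ⟨rfl, hρ⟩)⟩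

lemma exists_walk_length_eq_omegaW {σ : Word} (ht : σ.length ≤ t) :
    ∃ p : (Gt t).Walk σ [], p.length = omegaW σ := by
  induction σ using fW_induction with
  | nil => exact ⟨.nil, omegaW_nil.symm⟩
  | step σ hσ ih =>
    obtain ⟨p, hp⟩ := ih ((fW_prefix σ).length_le.trans ht)
    exact ⟨.cons (Gt_adj_fW ht hσ) p, by rw [SimpleGraph.Walk.length_cons, hp, omegaW_of_ne_nil hσ]⟩

lemma omegaW_le_add_length {σ τ : Word} (p : (Gt t).Walk σ τ) :
    omegaW σ ≤ omegaW τ + p.length := by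
  induction p with
  | nil => simp
  | cons h _ ih =>
    rw [SimpleGraph.Walk.length_cons]
    have := omegaW_le_succ_of_wordAdj h.2.2
    omega

lemma dW_nil_eq_omegaW {σ : Word} (ht : σ.length ≤ t) : dW t σ [] = omegaW σ := by
  obtain ⟨p, hp⟩ := exists_walk_length_eq_omegaW ht
  obtain ⟨q, hq⟩ := SimpleGraph.Reachable.exists_walk_length_eq_dist ⟨p⟩
  have := omegaW_le_add_length q
  rw [omegaW_nil] at this
  exact le_antisymm (hp ▸ SimpleGraph.dist_le p) (by rw [dW, ← hq]; omega)

end Distance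

lemma Lw_eq_omegaW_sub_one (σ : Word) : Lw σ = omegaW σ - 1 := by
  rcases eq_or_ne σ [] with rfl | h
  · simp [Lw, omegaW_nil]
  · rw [Lw, if_neg h, dW_nil_eq_omegaW le_rfl]

lemma Lw_append_le (σ τ : Word) : Lw (σ ++ τ) ≤ Lw σ + Lw τ + 1 := by
  simp only [Lw_eq_omegaW_sub_one]
  have := omegaW_append_le σ τ
  omega

lemma Lw_add_le_Lw_append (σ τ : Word) : Lw σ + Lw τ ≤ Lw (σ ++ τ) := by
  rcases eq_or_ne σ [] with rfl | hσ
  · simp [Lw]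
  rcases eq_or_ne τ [] with rfl | hτ
  · simp [Lw]
  simp only [Lw_eq_omegaW_sub_one]
  have := omegaW_add_le_omegaW_append σ τ
  have := omegaW_pos hσ
  have := omegaW_pos hτ
  omega

lemma alphaBar_eq_expect (m : ℕ) : alphaBar m = 𝔼 v : Fin m → Letter, (Lw (List.ofFn v) : ℝ) := by
  rw [Fintype.expect_eq_sum_div_card, alphaBar]
  simp

lemma alphaBar_add_eq_expect (k₁ k₂ : ℕ) :
    alphaBar (k₁ + k₂) = 𝔼 v : Fin k₁ → Letter, 𝔼 w : Fin k₂ → Letter,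
      (Lw (List.ofFn v ++ List.ofFn w) : ℝ) := by
  rw [alphaBar_eq_expect, ← Finset.expect_product' univ univ, Finset.univ_product_univ]
  exact Fintype.expect_equiv (Fin.appendEquiv k₁ k₂).symm _ _ fun u => by
    rw [List.ofFn_add]
    rfl

lemma alphaBar_add_alphaBar_le (k₁ k₂ : ℕ) : alphaBar k₁ + alphaBar k₂ ≤ alphaBar (k₁ + k₂) :=
  calc alphaBar k₁ + alphaBar k₂
      = 𝔼 v : Fin k₁ → Letter, 𝔼 w : Fin k₂ → Letter,
          ((Lw (List.ofFn v) : ℝ) + Lw (List.ofFn w)) := by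
        simp only [Finset.expect_add_distrib, Fintype.expect_const, alphaBar_eq_expect]
    _ ≤ alphaBar (k₁ + k₂) := by
        rw [alphaBar_add_eq_expect]
        gcongr with v _ w _
        exact_mod_cast Lw_add_le_Lw_append _ _

lemma alphaBar_add_le (k₁ k₂ : ℕ) : alphaBar (k₁ + k₂) ≤ alphaBar k₁ + alphaBar k₂ + 1 :=
  calc alphaBar (k₁ + k₂)
      ≤ 𝔼 v : Fin k₁ → Letter, 𝔼 w : Fin k₂ → Letter,
          ((Lw (List.ofFn v) : ℝ) + Lw (List.ofFn w) + 1) := by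
        rw [alphaBar_add_eq_expect]
        gcongr with v _ w _
        exact_mod_cast Lw_append_le _ _
    _ = alphaBar k₁ + alphaBar k₂ + 1 := by
        simp only [Finset.expect_add_distrib, Fintype.expect_const, alphaBar_eq_expect]

lemma alphaBar_nonneg (m : ℕ) : 0 ≤ alphaBar m :=
  div_nonneg (Finset.sum_nonneg fun _ _ => Nat.cast_nonneg _) (by positivity)

lemma alphaBar_le_succ (k : ℕ) : alphaBar k ≤ alphaBar (k + 1) := by
  linarith [alphaBar_add_alphaBar_le k 1, alphaBar_nonneg 1]

lemma natCast_mul_alphaBar_le (m q : ℕ) : (m : ℝ) * alphaBar q ≤ alphaBar (m * q) := by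
  induction m with
  | zero => simpa using alphaBar_nonneg 0
  | succ m ih =>
    rw [Nat.cast_succ, add_one_mul, add_one_mul]
    linarith [alphaBar_add_alphaBar_le (m * q) q]

lemma alphaBar_mul_div_le (q k : ℕ) : alphaBar q * (k / q : ℕ) ≤ alphaBar k :=
  calc alphaBar q * (k / q : ℕ) ≤ alphaBar (k / q * q) := by
        rw [mul_comm]
        exact natCast_mul_alphaBar_le _ _
    _ ≤ alphaBar k := monotone_nat_of_le_succ alphaBar_le_succ (Nat.div_mul_le_self k q)

lemma sub_add_one_le_mul_div {q : ℕ} (hq : 0 < q) (k : ℕ) : (k : ℝ) - q + 1 ≤ q * (k / q : ℕ) := by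
  have : k + 1 ≤ k / q * q + q := Nat.lt_div_mul_add hq
  have : ((k + 1 : ℕ) : ℝ) ≤ ((k / q * q + q : ℕ) : ℝ) := by exact_mod_cast this
  push_cast at this
  linarith

/-- For `k₁, k₂ ≥ 1`, `ᾱ_{k₁} + ᾱ_{k₂} ≤ ᾱ_{k₁+k₂} ≤ ᾱ_{k₁} + ᾱ_{k₂} + 1`; in particular
`(ᾱ_k)` is non-decreasing, and for positive integers `q, k`,
`ᾱ_k ≥ ᾱ_q·⌊k/q⌋ ≥ (ᾱ_q/q)(k − q + 1)`. -/
theorem alphaBar_superadditive :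
    (∀ k₁ k₂ : ℕ, 1 ≤ k₁ → 1 ≤ k₂ →
      alphaBar k₁ + alphaBar k₂ ≤ alphaBar (k₁ + k₂) ∧
      alphaBar (k₁ + k₂) ≤ alphaBar k₁ + alphaBar k₂ + 1) ∧
    (∀ k : ℕ, alphaBar k ≤ alphaBar (k + 1)) ∧
    (∀ q k : ℕ, 1 ≤ q → 1 ≤ k →
      alphaBar q * ((k / q : ℕ) : ℝ) ≤ alphaBar k ∧
      (alphaBar q / q) * ((k : ℝ) - q + 1) ≤ alphaBar q * ((k / q : ℕ) : ℝ)) := by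
  refine ⟨fun k₁ k₂ _ _ => ⟨alphaBar_add_alphaBar_le k₁ k₂, alphaBar_add_le k₁ k₂⟩,
    alphaBar_le_succ, fun q k hq _ => ⟨alphaBar_mul_div_le q k, ?_⟩⟩
  have hq₀ : (0 : ℝ) < q := by exact_mod_cast hq
  calc alphaBar q / q * ((k : ℝ) - q + 1) ≤ alphaBar q / q * (q * (k / q : ℕ)) := by
        gcongr
        · exact div_nonneg (alphaBar_nonneg q) hq₀.le
        · exact sub_add_one_le_mul_div hq k
    _ = alphaBar q * (k / q : ℕ) := by field_simp
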